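/- Let $\varphi$ be a Schwartz function on $\mathbb{R}^d$ and $N > d$ an integer with $|\check\varphi(x)| \le C(1+|x|)^{-N}$. Let $\ell, k$ be positive integers with $|\ell - k| \ge 8$, $n \ge \max(\ell,k)$, $e = (1,0,\dots,0)$, and let $\psi$ be Schwartz with $|\psi(y)| \le C(1+|y|)^{-2N}$. Then $\sup_{x: |2^\ell(x - 2^{2n+\ell}e)| \le 1} \left| \int_{\mathbb{R}^d} \check\varphi(2^\ell(x-y))\, \psi(2^k(y - 2^{2n+k}e))\, dy \right| \le C\left( 2^{-2d\ell} 2^{-2(k+2n)N} + 2^{-(\ell+2n)N}2^{-2dk} \right) \cdot 2^{d\max(\ell,k)}$ up to constants depending only on $d, N$. -/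

import Mathlib

/-!
Every `y` is far either from `x` or from the second centre `c₂ = 2^{2n+k} e`: `x` lies within
`1/2` of `c₁ = 2^{2n+ℓ} e`, and `|c₁ - c₂| ≥ 2^{2n+max(ℓ,k)-1}` because `ℓ ≠ k`. With
`ρ = 2^{2n+max(ℓ,k)-3}` one has `|x - y| ≥ ρ` or `|y - c₂| ≥ ρ`, so one of the two factors of the
integrand is bounded by its decay at scale `2^ℓ ρ`, resp. `2^k ρ`, while the other is integrated
over all of `ℝ^d`, which costs `2^{-dℓ}`, resp. `2^{-dk}`. The resulting powers of two are
dominated by the claimed ones.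
-/

open MeasureTheory Module

theorem one_add_rpow_neg_le {r R t : ℝ} (hr : 0 ≤ r) (hR : 0 < R) (hRt : R ≤ t) :
    (1 + t) ^ (-r) ≤ R ^ (-r) :=
  Real.rpow_le_rpow_of_nonpos hR (by linarith) (neg_nonpos.2 hr)

section Dichotomy

variable {α E 𝕜 : Type*} [MeasurableSpace α] {μ : Measure α} [NormedAddCommGroup E]
  [NormedRing 𝕜] {g ψ : E → 𝕜} {C₁ C₂ r s R₁ R₂ : ℝ}

theorem norm_mul_le_of_le_norm_or_le_norm (hC₁ : 0 ≤ C₁) (hC₂ : 0 ≤ C₂) (hr : 0 ≤ r)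
    (hs : 0 ≤ s) (hR₁ : 0 < R₁) (hR₂ : 0 < R₂)
    (hg : ∀ z, ‖g z‖ ≤ C₁ * (1 + ‖z‖) ^ (-r)) (hψ : ∀ w, ‖ψ w‖ ≤ C₂ * (1 + ‖w‖) ^ (-s))
    {z w : E} (hzw : R₁ ≤ ‖z‖ ∨ R₂ ≤ ‖w‖) :
    ‖g z * ψ w‖ ≤ C₁ * C₂ * (R₂ ^ (-s) * (1 + ‖z‖) ^ (-r) + R₁ ^ (-r) * (1 + ‖w‖) ^ (-s)) := by
  have hz : 0 ≤ (1 + ‖z‖) ^ (-r) := by positivity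
  have hw : 0 ≤ (1 + ‖w‖) ^ (-s) := by positivity
  have hR₁r : 0 ≤ R₁ ^ (-r) := by positivity
  have hR₂s : 0 ≤ R₂ ^ (-s) := by positivity
  refine (norm_mul_le _ _).trans ?_
  rcases hzw with hz' | hw'
  · calc ‖g z‖ * ‖ψ w‖ ≤ (C₁ * R₁ ^ (-r)) * (C₂ * (1 + ‖w‖) ^ (-s)) :=
          mul_le_mul
            ((hg z).trans (mul_le_mul_of_nonneg_left (one_add_rpow_neg_le hr hR₁ hz') hC₁))
            (hψ w) (norm_nonneg _) (by positivity)
      _ ≤ _ := by nlinarith [mul_nonneg (mul_nonneg hC₁ hC₂) (mul_nonneg hR₂s hz)]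
  · calc ‖g z‖ * ‖ψ w‖ ≤ (C₁ * (1 + ‖z‖) ^ (-r)) * (C₂ * R₂ ^ (-s)) :=
          mul_le_mul (hg z)
            ((hψ w).trans (mul_le_mul_of_nonneg_left (one_add_rpow_neg_le hs hR₂ hw') hC₂))
            (norm_nonneg _) (by positivity)
      _ ≤ _ := by nlinarith [mul_nonneg (mul_nonneg hC₁ hC₂) (mul_nonneg hR₁r hw)]

theorem norm_integral_mul_le_of_le_norm_or_le_norm [NormedSpace ℝ 𝕜] (hC₁ : 0 ≤ C₁)
    (hC₂ : 0 ≤ C₂) (hr : 0 ≤ r) (hs : 0 ≤ s) (hR₁ : 0 < R₁) (hR₂ : 0 < R₂)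
    (hg : ∀ z, ‖g z‖ ≤ C₁ * (1 + ‖z‖) ^ (-r)) (hψ : ∀ w, ‖ψ w‖ ≤ C₂ * (1 + ‖w‖) ^ (-s))
    {u v : α → E} (huv : ∀ y, R₁ ≤ ‖u y‖ ∨ R₂ ≤ ‖v y‖)
    (hu : Integrable (fun y => (1 + ‖u y‖) ^ (-r)) μ)
    (hv : Integrable (fun y => (1 + ‖v y‖) ^ (-s)) μ) :
    ‖∫ y, g (u y) * ψ (v y) ∂μ‖ ≤ C₁ * C₂ *
      (R₂ ^ (-s) * ∫ y, (1 + ‖u y‖) ^ (-r) ∂μ + R₁ ^ (-r) * ∫ y, (1 + ‖v y‖) ^ (-s) ∂μ) := by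
  calc ‖∫ y, g (u y) * ψ (v y) ∂μ‖
      ≤ ∫ y, C₁ * C₂ * (R₂ ^ (-s) * (1 + ‖u y‖) ^ (-r) + R₁ ^ (-r) * (1 + ‖v y‖) ^ (-s)) ∂μ :=
        norm_integral_le_of_norm_le (((hu.const_mul _).add (hv.const_mul _)).const_mul _)
          (ae_of_all _ fun y =>
            norm_mul_le_of_le_norm_or_le_norm hC₁ hC₂ hr hs hR₁ hR₂ hg hψ (huv y))
    _ = _ := by
        rw [integral_const_mul, integral_add (hu.const_mul _) (hv.const_mul _),
          integral_const_mul, integral_const_mul]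

end Dichotomy

section Rescaling

variable {E F : Type*} [NormedAddCommGroup E] [NormedSpace ℝ E] [FiniteDimensional ℝ E]
  [MeasurableSpace E] [BorelSpace E] (μ : Measure E) [μ.IsAddHaarMeasure]
  [NormedAddCommGroup F] [NormedSpace ℝ F]

theorem integral_comp_smul_sub_left (f : E → F) (a : ℝ) (x : E) :
    ∫ y, f (a • (x - y)) ∂μ = |(a ^ finrank ℝ E)⁻¹| • ∫ z, f z ∂μ := by
  rw [integral_sub_left_eq_self (fun z => f (a • z)) μ x, Measure.integral_comp_smul]

theorem integral_comp_smul_sub_right (f : E → F) (a : ℝ) (c : E) :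
    ∫ y, f (a • (y - c)) ∂μ = |(a ^ finrank ℝ E)⁻¹| • ∫ z, f z ∂μ := by
  rw [integral_sub_right_eq_self (fun z => f (a • z)) c, Measure.integral_comp_smul]

theorem integral_one_add_norm_rpow_pos {r : ℝ} (hr : (finrank ℝ E : ℝ) < r) :
    0 < ∫ z, (1 + ‖z‖) ^ (-r) ∂μ := by
  rw [integral_pos_iff_support_of_nonneg (fun z => by positivity) (integrable_one_add_norm hr),
    Function.support_eq_univ fun z => by positivity]
  exact Measure.measure_univ_pos.2 (NeZero.ne μ)

end Rescaling

theorem two_pow_max_le_two_mul_abs_sub {a b : ℕ} (h : a ≠ b) :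
    (2 : ℝ) ^ max a b ≤ 2 * |2 ^ a - 2 ^ b| := by
  have key : ∀ {a b : ℕ}, a < b → (2 : ℝ) ^ b ≤ 2 * |2 ^ a - 2 ^ b| := fun {a b} hab => by
    have : (2 : ℝ) ^ (a + 1) ≤ 2 ^ b := pow_le_pow_right₀ one_le_two hab
    rw [pow_succ] at this
    rw [abs_sub_comm, abs_of_pos (by linarith [pow_pos (two_pos (α := ℝ)) a])]
    linarith
  rcases h.lt_or_gt with hab | hab
  · rw [max_eq_right hab.le]; exact key hab
  · rw [max_eq_left hab.le, abs_sub_comm]; exact key hab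

section Separation

variable {E : Type*} [SeminormedAddCommGroup E] [NormedSpace ℝ E]

theorem le_norm_sub_smul_of_norm_smul_sub_smul_le {e x : E} (he : ‖e‖ = 1) {j ℓ k : ℕ}
    (hℓ : 1 ≤ ℓ) (hℓk : ℓ ≠ k) (hx : ‖(2 : ℝ) ^ ℓ • (x - (2 : ℝ) ^ (j + ℓ) • e)‖ ≤ 1) :
    (2 : ℝ) ^ (j + max ℓ k) / 4 ≤ ‖x - (2 : ℝ) ^ (j + k) • e‖ := by
  have h2ℓ : (2 : ℝ) ≤ 2 ^ ℓ := le_self_pow₀ one_le_two (by omega)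
  have hxc : ‖x - (2 : ℝ) ^ (j + ℓ) • e‖ ≤ 1 / 2 := by
    rw [norm_smul, Real.norm_of_nonneg (by positivity)] at hx
    rw [le_div_iff₀ two_pos]
    nlinarith [norm_nonneg (x - (2 : ℝ) ^ (j + ℓ) • e)]
  have hcc : (2 : ℝ) ^ (j + max ℓ k) ≤ 2 * ‖(2 : ℝ) ^ (j + ℓ) • e - (2 : ℝ) ^ (j + k) • e‖ := by
    rw [← sub_smul, norm_smul, he, mul_one, Real.norm_eq_abs, ← Nat.add_max_add_left]
    exact two_pow_max_le_two_mul_abs_sub (by omega)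
  have h2 : (2 : ℝ) ≤ 2 ^ (j + max ℓ k) := le_self_pow₀ one_le_two (by omega)
  have := norm_sub_le_norm_sub_add_norm_sub ((2 : ℝ) ^ (j + ℓ) • e) x ((2 : ℝ) ^ (j + k) • e)
  rw [norm_sub_rev _ x] at this
  linarith

theorem le_norm_smul_sub_or_le_norm_smul_sub {a b ρ : ℝ} (ha : 0 ≤ a) (hb : 0 ≤ b) {x c : E}
    (h : 2 * ρ ≤ ‖x - c‖) (y : E) : a * ρ ≤ ‖a • (x - y)‖ ∨ b * ρ ≤ ‖b • (y - c)‖ := by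
  rw [norm_smul, norm_smul, Real.norm_of_nonneg ha, Real.norm_of_nonneg hb]
  have := norm_sub_le_norm_sub_add_norm_sub x y c
  rcases le_or_gt ρ ‖x - y‖ with hxy | hxy
  · exact .inl (mul_le_mul_of_nonneg_left hxy ha)
  · exact .inr (mul_le_mul_of_nonneg_left (by linarith) hb)

end Separation

theorem two_pow_mul_zpow_rpow_neg (a : ℕ) (p : ℤ) (M : ℕ) :
    ((2 : ℝ) ^ a * 2 ^ p) ^ (-(M : ℝ)) = 2 ^ (-((a + p) * M)) := by
  rw [← zpow_natCast (2 : ℝ) a, ← zpow_add₀ two_ne_zero, Real.rpow_neg (by positivity),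
    Real.rpow_natCast, ← zpow_natCast, ← zpow_mul, zpow_neg]

theorem abs_inv_two_pow_pow (b d : ℕ) : |(((2 : ℝ) ^ b) ^ d)⁻¹| = 2 ^ (-(b * d : ℤ)) := by
  rw [abs_of_pos (by positivity), ← pow_mul, zpow_neg, ← Nat.cast_mul, zpow_natCast]

theorem cross_term_weights_le (d N ℓ k n : ℕ) {I J : ℝ} (hI : 0 ≤ I) (hJ : 0 ≤ J) :
    ((2 : ℝ) ^ k * 2 ^ ((2 * n + max ℓ k : ℤ) - 3)) ^ (-(2 * N : ℝ)) * |(((2 : ℝ) ^ ℓ) ^ d)⁻¹| * I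
      + ((2 : ℝ) ^ ℓ * 2 ^ ((2 * n + max ℓ k : ℤ) - 3)) ^ (-(N : ℝ)) * |(((2 : ℝ) ^ k) ^ d)⁻¹| * J
      ≤ 2 ^ (6 * N) * (I + J) *
        (((2 : ℝ) ^ (-(2 * (d : ℤ) * ℓ)) * (2 : ℝ) ^ (-(2 * ((k : ℤ) + 2 * n) * N))
          + (2 : ℝ) ^ (-(((ℓ : ℤ) + 2 * n) * N)) * (2 : ℝ) ^ (-(2 * (d : ℤ) * k)))
          * (2 : ℝ) ^ ((d : ℤ) * max ℓ k)) := by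
  have hℓ : ℓ ≤ max ℓ k := le_max_left ℓ k
  have hk : k ≤ max ℓ k := le_max_right ℓ k
  have h₁ : ((2 : ℝ) ^ k * 2 ^ ((2 * n + max ℓ k : ℤ) - 3)) ^ (-(2 * N : ℝ))
      * |(((2 : ℝ) ^ ℓ) ^ d)⁻¹| ≤ 2 ^ (6 * N) * ((2 : ℝ) ^ (-(2 * (d : ℤ) * ℓ))
        * (2 : ℝ) ^ (-(2 * ((k : ℤ) + 2 * n) * N))) * (2 : ℝ) ^ ((d : ℤ) * max ℓ k) := by
    rw [show (2 * N : ℝ) = ((2 * N : ℕ) : ℝ) by push_cast; ring, two_pow_mul_zpow_rpow_neg,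
      abs_inv_two_pow_pow, ← zpow_natCast (2 : ℝ) (6 * N)]
    simp only [← zpow_add₀ (two_ne_zero (α := ℝ))]
    apply zpow_le_zpow_right₀ one_le_two
    push_cast
    nlinarith
  have h₂ : ((2 : ℝ) ^ ℓ * 2 ^ ((2 * n + max ℓ k : ℤ) - 3)) ^ (-(N : ℝ))
      * |(((2 : ℝ) ^ k) ^ d)⁻¹| ≤ 2 ^ (6 * N) * ((2 : ℝ) ^ (-(((ℓ : ℤ) + 2 * n) * N))
        * (2 : ℝ) ^ (-(2 * (d : ℤ) * k))) * (2 : ℝ) ^ ((d : ℤ) * max ℓ k) := by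
    rw [two_pow_mul_zpow_rpow_neg, abs_inv_two_pow_pow, ← zpow_natCast (2 : ℝ) (6 * N)]
    simp only [← zpow_add₀ (two_ne_zero (α := ℝ))]
    apply zpow_le_zpow_right₀ one_le_two
    push_cast
    nlinarith
  linarith [mul_le_mul_of_nonneg_right h₁ hI, mul_le_mul_of_nonneg_right h₂ hJ,
    mul_nonneg (le_trans (by positivity) h₁) hJ, mul_nonneg (le_trans (by positivity) h₂) hI]

/-- Cross-term smallness estimate: there is `C` depending only on `d, N` such that whenever
`|ǧ(x)| ≤ C₁(1+|x|)^{-N}`, `|ψ(y)| ≤ C₂(1+|y|)^{-2N}`, `ℓ, k ≥ 1` with `|ℓ-k| ≥ 8` and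
`n ≥ max(ℓ,k)`, one has, for all `x` with `|2^ℓ(x - 2^{2n+ℓ}e)| ≤ 1`,
`|∫ ǧ(2^ℓ(x-y)) ψ(2^k(y - 2^{2n+k}e)) dy|
  ≤ C C₁ C₂ (2^{-2dℓ} 2^{-2(k+2n)N} + 2^{-(ℓ+2n)N} 2^{-2dk}) 2^{d max(ℓ,k)}`. -/
theorem cross_term_estimate (d N : ℕ) (hd : 1 ≤ d) (hN : d < N) :
    ∃ C : ℝ, 0 < C ∧
      ∀ (C₁ C₂ : ℝ), 0 < C₁ → 0 < C₂ →
      ∀ (g ψ : EuclideanSpace ℝ (Fin d) → ℂ),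
        Continuous g → Continuous ψ →
        (∀ x, ‖g x‖ ≤ C₁ * (1 + ‖x‖) ^ (-(N : ℝ))) →
        (∀ y, ‖ψ y‖ ≤ C₂ * (1 + ‖y‖) ^ (-(2 * N : ℝ))) →
      ∀ (ℓ k n : ℕ), 1 ≤ ℓ → 1 ≤ k → (ℓ + 8 ≤ k ∨ k + 8 ≤ ℓ) → max ℓ k ≤ n →
      ∀ e : EuclideanSpace ℝ (Fin d), e = EuclideanSpace.single ⟨0, hd⟩ 1 →
      ∀ x : EuclideanSpace ℝ (Fin d),
        ‖(2 : ℝ) ^ ℓ • (x - (2 : ℝ) ^ (2 * n + ℓ) • e)‖ ≤ 1 →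
        ‖∫ y : EuclideanSpace ℝ (Fin d),
            g ((2 : ℝ) ^ ℓ • (x - y)) * ψ ((2 : ℝ) ^ k • (y - (2 : ℝ) ^ (2 * n + k) • e))‖
          ≤ C * C₁ * C₂ *
            ((2 : ℝ) ^ (-(2 * (d : ℤ) * ℓ)) * (2 : ℝ) ^ (-(2 * ((k : ℤ) + 2 * n) * N))
              + (2 : ℝ) ^ (-(((ℓ : ℤ) + 2 * n) * N)) * (2 : ℝ) ^ (-(2 * (d : ℤ) * k)))
            * (2 : ℝ) ^ ((d : ℤ) * max ℓ k) := by
  have hr : (finrank ℝ (EuclideanSpace ℝ (Fin d)) : ℝ) < N := by simpa using hN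
  have hs : (finrank ℝ (EuclideanSpace ℝ (Fin d)) : ℝ) < 2 * N := by
    linarith [(N.cast_nonneg : (0 : ℝ) ≤ N)]
  set I : ℝ → ℝ := fun r => ∫ z : EuclideanSpace ℝ (Fin d), (1 + ‖z‖) ^ (-r)
  have hIr : 0 < I N := integral_one_add_norm_rpow_pos volume hr
  have hIs : 0 < I (2 * N) := integral_one_add_norm_rpow_pos volume hs
  refine ⟨2 ^ (6 * N) * (I N + I (2 * N)), by positivity, ?_⟩
  intro C₁ C₂ hC₁ hC₂ g ψ _ _ hg hψ ℓ k n hℓ _ hℓk _ e he x hx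
  have hsep := le_norm_sub_smul_of_norm_smul_sub_smul_le (k := k) (by simp [he]) hℓ (by omega) hx
  have hρ : 2 * (2 : ℝ) ^ ((2 * n + max ℓ k : ℤ) - 3) = 2 ^ (2 * n + max ℓ k) / 4 := by
    rw [zpow_sub₀ two_ne_zero, ← Nat.cast_ofNat (R := ℤ), ← Nat.cast_mul, ← Nat.cast_add,
      zpow_natCast]
    ring
  have hsplit := le_norm_smul_sub_or_le_norm_smul_sub (a := 2 ^ ℓ) (b := 2 ^ k)
    (by positivity) (by positivity) (hρ ▸ hsep)
  refine (norm_integral_mul_le_of_le_norm_or_le_norm hC₁.le hC₂.le (by positivity)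
    (by positivity) (by positivity) (by positivity) hg hψ hsplit
    (((integrable_one_add_norm hr).comp_smul (by positivity)).comp_sub_left x)
    (((integrable_one_add_norm hs).comp_smul (by positivity)).comp_sub_right _)).trans ?_
  rw [integral_comp_smul_sub_left volume (fun z => (1 + ‖z‖) ^ (-(N : ℝ))),
    integral_comp_smul_sub_right volume (fun z => (1 + ‖z‖) ^ (-(2 * N : ℝ))),
    finrank_euclideanSpace_fin, smul_eq_mul, smul_eq_mul, ← mul_assoc, ← mul_assoc]
  refine (mul_le_mul_of_nonneg_left (cross_term_weights_le d N ℓ k n hIr.le hIs.le)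
    (by positivity)).trans_eq ?_
  ring
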